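/- arXiv:1603.04087 — 8 statements merged into one kernel-verified Lean document; each statement's English description precedes it below -/
import Mathlib

section
/- Let F ∈ k[x₀,...,x₄] be a nonzero homogeneous polynomial of degree 3 and suppose the hypersurface Y = {F = 0} ⊂ ℙ⁴ has only finitely many singular points. Then no three distinct singular points of Y are collinear: if p, q, r ∈ k⁵ \ {0} represent three pairwise distinct points of ℙ⁴, all singular on Y, then p, q, r span a linear subspace of k⁵ of dimension 3. -/
/-!
Each partial derivative `G` of `F` is a quadric, and on the plane spanned by two vectors `x`, `y`
it is a binary quadratic form `G (s • x + t • y) = s² G x + β s t + t² G y`. If `G` vanishes at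
`x`, at `y` and at some `a • x + b • y` with `a b ≠ 0`, then `β = 0` and `G` vanishes on the
whole plane. So if three distinct singular points were collinear, every point of the line
through them would be singular; over an infinite field that line has infinitely many points.
-/

open MvPolynomial

namespace Polynomial

variable {R : Type*} [CommSemiring R]

theorem eval_homogenize_two (p : R[X]) (v : Fin 2 → R) :
    MvPolynomial.eval v (p.homogenize 2) =
      p.coeff 2 * v 0 ^ 2 + p.coeff 1 * v 0 * v 1 + p.coeff 0 * v 1 ^ 2 := by
  rw [homogenize, map_sum, Finset.Nat.sum_antidiagonal_eq_sum_range_succ_mk]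
  simp only [Finset.sum_range_succ, Finset.sum_range_zero, MvPolynomial.eval_monomial,
    Finsupp.prod_fintype _ _ (fun _ => pow_zero _), Fin.prod_univ_two, Finsupp.coe_update,
    Function.update_self, Function.update_of_ne zero_ne_one, Finsupp.single_eq_same]
  ring

end Polynomial

namespace MvPolynomial

variable {R σ : Type*} [CommSemiring R] {φ : MvPolynomial σ R}

theorem IsHomogeneous.exists_eval_fin_two_eq {B : MvPolynomial (Fin 2) R}
    (hB : B.IsHomogeneous 2) : ∃ β : R, ∀ v : Fin 2 → R,
      eval v B = eval ![1, 0] B * v 0 ^ 2 + β * v 0 * v 1 + eval ![0, 1] B * v 1 ^ 2 := by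
  -- `B` is the homogenization of its dehomogenization `B (X, 1)`.
  set p := MvPolynomial.aeval (![Polynomial.X, 1] : Fin 2 → Polynomial R) B
  have hpB : p.homogenize 2 = B := Polynomial.homogenize_eq_of_isHomogeneous hB rfl
  refine ⟨p.coeff 1, fun v => ?_⟩
  simp only [← hpB, Polynomial.eval_homogenize_two]
  simp

theorem IsHomogeneous.exists_eval_smul_add_smul_eq (hφ : φ.IsHomogeneous 2) (x y : σ → R) :
    ∃ β : R, ∀ s t : R,
      eval (s • x + t • y) φ = s ^ 2 * eval x φ + β * s * t + t ^ 2 * eval y φ := by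
  set g : σ → MvPolynomial (Fin 2) R := fun i => C (x i) * X 0 + C (y i) * X 1
  have hB : (bind₁ g φ).IsHomogeneous 2 := by
    simpa using hφ.aeval g fun i =>
      (isHomogeneous_C_mul_X (x i) 0).add (isHomogeneous_C_mul_X (y i) 1)
  have hBeval (s t : R) : eval ![s, t] (bind₁ g φ) = eval (s • x + t • y) φ := by
    rw [eval, eval₂Hom_bind₁, eval]
    congr 2
    funext i
    simp [g, mul_comm]
  obtain ⟨β, hβ⟩ := hB.exists_eval_fin_two_eq
  refine ⟨β, fun s t => ?_⟩
  have h10 := hBeval 1 0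
  have h01 := hBeval 0 1
  simp only [one_smul, zero_smul, add_zero, zero_add] at h10 h01
  rw [← hBeval, hβ, h10, h01]
  simp only [Matrix.cons_val_zero, Matrix.cons_val_one]
  ring

theorem IsHomogeneous.eval_eq_zero_of_mem_span_pair [NoZeroDivisors R] (hφ : φ.IsHomogeneous 2)
    {x y : σ → R} (hx : eval x φ = 0) (hy : eval y φ = 0) {a b : R} (ha : a ≠ 0) (hb : b ≠ 0)
    (hab : eval (a • x + b • y) φ = 0) {v : σ → R} (hv : v ∈ Submodule.span R {x, y}) :
    eval v φ = 0 := by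
  obtain ⟨β, hβ⟩ := hφ.exists_eval_smul_add_smul_eq x y
  have hβ0 : β = 0 := by simpa [hβ, hx, hy, ha, hb] using hab
  obtain ⟨s, t, rfl⟩ := Submodule.mem_span_pair.mp hv
  simp [hβ, hx, hy, hβ0]

end MvPolynomial

open scoped LinearAlgebra.Projectivization

namespace Projectivization

variable {K V : Type*} [DivisionRing K] [AddCommGroup V] [Module K V]

theorem infinite_setOf_rep_mem_span_pair [Infinite K] {u v : V}
    (huv : LinearIndependent K ![u, v]) :
    {x : ℙ K V | x.rep ∈ Submodule.span K {u, v}}.Infinite := by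
  have hne (t : K) : u + t • v ≠ 0 := by
    intro h
    exact one_ne_zero (LinearIndependent.pair_iff.mp huv 1 t (by rwa [one_smul])).1
  refine Set.infinite_of_injective_forall_mem (f := fun t => mk K (u + t • v) (hne t)) ?_ ?_
  · intro t t' htt'
    obtain ⟨c, hc⟩ := (mk_eq_mk_iff' K _ _ (hne t) (hne t')).mp htt'
    have h := LinearIndependent.pair_iff.mp huv (c - 1) (c * t' - t) (by
      rw [sub_smul, sub_smul, one_smul, mul_smul, ← sub_eq_zero.mpr hc, smul_add]
      abel)
    have hc1 : c = 1 := sub_eq_zero.mp h.1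
    simpa [hc1, sub_eq_zero, eq_comm] using h.2
  · intro t
    obtain ⟨a, ha⟩ := exists_smul_eq_mk_rep K _ (hne t)
    rw [Set.mem_ofPred_eq, ← ha]
    exact Submodule.smul_mem _ _ (Submodule.add_mem _ (Submodule.subset_span (by simp))
      (Submodule.smul_mem _ _ (Submodule.subset_span (by simp))))

end Projectivization

theorem LinearIndependent.finrank_span_triple_eq_three {K V : Type*} [DivisionRing K]
    [AddCommGroup V] [Module K V] {u v w : V}
    (huv : LinearIndependent K ![u, v]) (hw : w ∉ Submodule.span K {u, v}) :
    Module.finrank K (Submodule.span K {u, v, w}) = 3 := by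
  have h : LinearIndependent K ![w, u, v] :=
    linearIndependent_finCons.mpr ⟨huv, by rwa [Matrix.range_cons_cons_empty]⟩
  have := finrank_span_eq_card h
  rw [Matrix.range_cons, Matrix.range_cons_cons_empty] at this
  rwa [Set.singleton_union, Set.insert_comm, Set.pair_comm, Fintype.card_fin] at this

theorem stmt_0_general {k : Type} [Field k] [CharZero k]
    (F : MvPolynomial (Fin 5) k) (hhom : F.IsHomogeneous 3)
    (hfin : {x : Projectivization k (Fin 5 → k) |
        ∀ i, MvPolynomial.eval x.rep (MvPolynomial.pderiv i F) = 0}.Finite)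
    (p q r : Fin 5 → k) (hp : p ≠ 0) (hq : q ≠ 0) (hr : r ≠ 0)
    (hpq : Projectivization.mk k p hp ≠ Projectivization.mk k q hq)
    (hpr : Projectivization.mk k p hp ≠ Projectivization.mk k r hr)
    (hqr : Projectivization.mk k q hq ≠ Projectivization.mk k r hr)
    (hsp : ∀ i, MvPolynomial.eval p (MvPolynomial.pderiv i F) = 0)
    (hsq : ∀ i, MvPolynomial.eval q (MvPolynomial.pderiv i F) = 0)
    (hsr : ∀ i, MvPolynomial.eval r (MvPolynomial.pderiv i F) = 0) :
    Module.finrank k (Submodule.span k ({p, q, r} : Set (Fin 5 → k))) = 3 := by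
  have hpq' : LinearIndependent k ![p, q] :=
    (Projectivization.independent_mk_iff_LinearIndependent hp hq).mp
      ((Projectivization.independent_pair_iff_ne _ _).mpr hpq)
  refine hpq'.finrank_span_triple_eq_three fun hr_mem => ?_
  obtain ⟨a, b, rfl⟩ := Submodule.mem_span_pair.mp hr_mem
  have ha : a ≠ 0 := by
    rintro rfl
    exact hqr ((Projectivization.mk_eq_mk_iff' k _ q hr hq).mpr ⟨b, by simp⟩).symm
  have hb : b ≠ 0 := by
    rintro rfl
    exact hpr ((Projectivization.mk_eq_mk_iff' k _ p hr hp).mpr ⟨a, by simp⟩).symm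
  have hline (v : Fin 5 → k) (hv : v ∈ Submodule.span k {p, q}) (i : Fin 5) :
      eval v (pderiv i F) = 0 :=
    (hhom.pderiv (i := i)).eval_eq_zero_of_mem_span_pair (hsp i) (hsq i) ha hb (hsr i) hv
  refine (Projectivization.infinite_setOf_rep_mem_span_pair hpq').mono ?_ hfin
  exact fun x hx => hline x.rep hx

/-- For a nonzero homogeneous cubic `F` in 5 variables whose hypersurface
`{F = 0} ⊂ ℙ⁴` has only finitely many singular points, no three distinct singular
points are collinear: three pairwise distinct singular points span a 3-dimensional
linear subspace of `k⁵`. -/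
theorem stmt_0 {k : Type} [Field k] [IsAlgClosed k] [CharZero k]
    (F : MvPolynomial (Fin 5) k) (hF : F ≠ 0) (hhom : F.IsHomogeneous 3)
    (hfin : {x : Projectivization k (Fin 5 → k) |
        ∀ i, MvPolynomial.eval x.rep (MvPolynomial.pderiv i F) = 0}.Finite)
    (p q r : Fin 5 → k) (hp : p ≠ 0) (hq : q ≠ 0) (hr : r ≠ 0)
    (hpq : Projectivization.mk k p hp ≠ Projectivization.mk k q hq)
    (hpr : Projectivization.mk k p hp ≠ Projectivization.mk k r hr)
    (hqr : Projectivization.mk k q hq ≠ Projectivization.mk k r hr)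
    (hsp : ∀ i, MvPolynomial.eval p (MvPolynomial.pderiv i F) = 0)
    (hsq : ∀ i, MvPolynomial.eval q (MvPolynomial.pderiv i F) = 0)
    (hsr : ∀ i, MvPolynomial.eval r (MvPolynomial.pderiv i F) = 0) :
    Module.finrank k (Submodule.span k ({p, q, r} : Set (Fin 5 → k))) = 3 :=
  stmt_0_general F hhom hfin p q r hp hq hr hpq hpr hqr hsp hsq hsr
end

section
/- Every subgroup G of the symmetric group on a 6-element set whose natural action on the 6 elements is transitive contains an element of order 3 having no fixed points (equivalently, an element that is a product of two disjoint 3-cycles, i.e. acts with exactly two orbits, each of length 3). -/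
/-!
An element of order `3` fixing a point lies in a point stabilizer, which has order `|G| / 6` by
transitivity; so if `9 ∤ |G|`, any element of order `3` (Cauchy) moves every point.
If `9 ∣ |G|`, take `P ≤ G` of order `9`. No permutation of six points has a `9`-cycle, so the
elements of `P` have order dividing `3`, and each has a number of fixed points `≡ 6 [MOD 3]`.
A nontrivial one with a fixed point therefore fixes exactly `3` points; if all eight nontrivial
elements did, Burnside's lemma would make `9` divide `6 + 8 * 3 = 30`.
-/

open Equiv Equiv.Perm MulAction

theorem Equiv.Perm.orderOf_dvd_of_dvd_sq {α : Type*} [Fintype α] {p : ℕ} (hp : p.Prime)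
    (hα : Fintype.card α < p ^ 2) {σ : Perm α} (hσ : orderOf σ ∣ p ^ 2) : orderOf σ ∣ p := by
  classical
  rw [← lcm_cycleType] at hσ ⊢
  refine Multiset.lcm_dvd.mpr fun n hn => ?_
  obtain ⟨k, -, rfl⟩ := (Nat.dvd_prime_pow hp).mp ((Multiset.dvd_lcm hn).trans hσ)
  have hlt : p ^ k < p ^ 2 :=
    ((le_card_support_of_mem_cycleType hn).trans (Finset.card_le_univ _)).trans_lt hα
  have hk : k ≤ 1 := Nat.lt_succ_iff.mp ((Nat.pow_lt_pow_iff_right hp.one_lt).mp hlt)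
  simpa using pow_dvd_pow p hk

theorem MulAction.smul_ne_self_of_orderOf_eq_prime {G X : Type*} [Group G] [MulAction G X]
    [IsPretransitive G X] {p : ℕ} (hX : p ∣ Nat.card X) (hG : ¬ p ^ 2 ∣ Nat.card G) {g : G}
    (hg : orderOf g = p) (x : X) : g • x ≠ x := by
  intro hx
  have hstab : p ∣ Nat.card (stabilizer G x) := hg ▸ (stabilizer G x).orderOf_dvd_natCard hx
  apply hG
  rw [← (stabilizer G x).index_mul_card, index_stabilizer_of_transitive, sq]
  exact mul_dvd_mul hX hstab

theorem Equiv.Perm.card_compl_support_eq_three {α : Type*} [Fintype α] [DecidableEq α]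
    (hα : Fintype.card α = 6) {σ : Perm α} (hσ : σ ^ 3 ^ 2 = 1) (h1 : σ ≠ 1) {x : α}
    (hx : σ x = x) : σ.supportᶜ.card = 3 := by
  have : Fact (Nat.Prime 3) := ⟨Nat.prime_three⟩
  have hmod := (card_compl_support_modEq hσ).symm.dvd
  have hpos : 0 < σ.supportᶜ.card := Finset.card_pos.mpr ⟨x, by simpa using hx⟩
  have hsupp : σ.support.card ≠ 0 := mt card_support_eq_zero.mp h1
  rw [Finset.card_compl, hα] at *
  omega

theorem Subgroup.exists_ne_one_forall_apply_ne_of_card_eq_nine {α : Type*} [Fintype α]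
    (hα : Fintype.card α = 6) {P : Subgroup (Perm α)} (hP : Nat.card P = 3 ^ 2) :
    ∃ g ∈ P, g ≠ 1 ∧ ∀ x, g x ≠ x := by
  classical
  by_contra! hfix
  have hfixed (g : P) : Fintype.card (fixedBy α g) = if g = 1 then 6 else 3 := by
    have hcard : Fintype.card (fixedBy α g) = (g : Perm α).supportᶜ.card := by
      rw [← Set.toFinset_card]
      congr 1
      ext x
      simp [Subgroup.smul_def, Perm.smul_def]
    split_ifs with h1
    · subst h1
      simpa using hα
    · obtain ⟨x, hx⟩ := hfix g g.2 (by simpa using h1)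
      have hg9 : (g : Perm α) ^ 3 ^ 2 = 1 := by
        rw [← hP]
        exact congrArg Subtype.val (pow_card_eq_one' (x := g))
      rw [hcard]
      exact card_compl_support_eq_three hα hg9 (by simpa using h1) hx
  have hburnside := sum_card_fixedBy_eq_card_orbits_mul_card_group P α
  simp only [hfixed, Finset.sum_ite, Finset.filter_eq', Finset.filter_ne', Finset.mem_univ,
    if_true, Finset.sum_const, Finset.card_singleton, Finset.card_erase_of_mem, Finset.card_univ,
    ← Nat.card_eq_fintype_card, hP, smul_eq_mul] at hburnside
  omega

theorem Subgroup.exists_orderOf_eq_three_forall_apply_ne_of_card_eq_nine {α : Type*}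
    [Fintype α] (hα : Fintype.card α = 6) {P : Subgroup (Perm α)}
    (hP : Nat.card P = 3 ^ 2) : ∃ g ∈ P, orderOf g = 3 ∧ ∀ x, g x ≠ x := by
  obtain ⟨g, hgP, hg1, hgfree⟩ := exists_ne_one_forall_apply_ne_of_card_eq_nine hα hP
  have hg3 : orderOf g ∣ 3 :=
    orderOf_dvd_of_dvd_sq Nat.prime_three (by omega) (hP ▸ P.orderOf_dvd_natCard hgP)
  refine ⟨g, hgP, ?_, hgfree⟩
  exact (Nat.prime_three.eq_one_or_self_of_dvd _ hg3).resolve_left (mt orderOf_eq_one_iff.mp hg1)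

/-- Every subgroup of `S₆` acting transitively on the 6 elements
contains an element of order 3 without fixed points (i.e. a product of two
disjoint 3-cycles). -/
theorem stmt_3 (G : Subgroup (Equiv.Perm (Fin 6)))
    (htrans : ∀ a b : Fin 6, ∃ g ∈ G, g a = b) :
    ∃ g ∈ G, orderOf g = 3 ∧ ∀ x : Fin 6, g x ≠ x := by
  have : Fact (Nat.Prime 3) := ⟨Nat.prime_three⟩
  have : IsPretransitive G (Fin 6) :=
    ⟨fun a b => let ⟨g, hg, hgab⟩ := htrans a b; ⟨⟨g, hg⟩, hgab⟩⟩
  have h6 : 6 ∣ Nat.card G := by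
    simpa [index_stabilizer_of_transitive] using (stabilizer G (0 : Fin 6)).index_dvd_card
  by_cases h9 : 3 ^ 2 ∣ Nat.card G
  · obtain ⟨H, hH⟩ := Sylow.exists_subgroup_card_pow_prime 3 h9
    have hP : Nat.card (H.map G.subtype) = 3 ^ 2 := by
      rwa [Subgroup.card_map_of_injective G.subtype_injective]
    obtain ⟨g, hgP, hg⟩ :=
      Subgroup.exists_orderOf_eq_three_forall_apply_ne_of_card_eq_nine (Fintype.card_fin 6) hP
    exact ⟨g, Subgroup.map_subtype_le H hgP, hg⟩
  · obtain ⟨g, hg⟩ := exists_prime_orderOf_dvd_card' (G := G) 3 (dvd_trans (by norm_num) h6)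
    exact ⟨g, g.2, by rwa [Subgroup.orderOf_coe], smul_ne_self_of_orderOf_eq_prime (by simp) h9 hg⟩
end

section
/- Let F = F_{c₁,c₂,c₃,d} = x₁x₂x₃ + x₄x₀(x₀−x₁−x₂−x₃) + x₄²(c₁x₁+c₂x₂+c₃x₃) + d·x₄³ ∈ k[x₀,...,x₄]. If α₀, α₁, α₂, α₃ ∈ k and λ ∈ k* are such that the linear substitution xᵢ ↦ xᵢ + αᵢ·x₄ for i = 0,1,2,3 and x₄ ↦ x₄ transforms F into λ·F, then α₀ = α₁ = α₂ = α₃ = 0 (and λ = 1); i.e. the only such substitution preserving the cubic is the identity. -/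
open MvPolynomial

/-- For `F = x₁x₂x₃ + x₄x₀(x₀−x₁−x₂−x₃) + x₄²(c₁x₁+c₂x₂+c₃x₃) + d·x₄³`,
the only substitution `xᵢ ↦ xᵢ + αᵢx₄` (for `i = 0,1,2,3`, with `x₄ ↦ x₄`)
transforming `F` into a nonzero scalar multiple `λ·F` is the identity:
`α₀ = α₁ = α₂ = α₃ = 0` and `λ = 1`. -/
theorem stmt_8 {k : Type} [Field k] [IsAlgClosed k] [CharZero k]
    (c₁ c₂ c₃ d : k) (F : MvPolynomial (Fin 5) k)
    (hFdef : F = X 1 * X 2 * X 3 + X 4 * X 0 * (X 0 - X 1 - X 2 - X 3)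
      + X 4 ^ 2 * (C c₁ * X 1 + C c₂ * X 2 + C c₃ * X 3) + C d * X 4 ^ 3)
    (α : Fin 5 → k) (hα4 : α 4 = 0) (lam : k) (hlam : lam ≠ 0)
    (hsub : (MvPolynomial.bind₁ (fun i => X i + C (α i) * X 4)) F = C lam * F) :
    (∀ i, α i = 0) ∧ lam = 1 := by
  subst hFdef
  simp only [map_add, map_mul, map_sub, map_pow, bind₁_X_right, bind₁_C_right, hα4,
    map_zero, zero_mul, add_zero] at hsub
  have key : ∀ v0 v1 v2 v3 t : k,
      (v1 + α 1 * t) * (v2 + α 2 * t) * (v3 + α 3 * t)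
        + t * (v0 + α 0 * t) * ((v0 + α 0 * t) - (v1 + α 1 * t) - (v2 + α 2 * t) - (v3 + α 3 * t))
        + t ^ 2 * (c₁ * (v1 + α 1 * t) + c₂ * (v2 + α 2 * t) + c₃ * (v3 + α 3 * t)) + d * t ^ 3
      = lam * (v1 * v2 * v3 + t * v0 * (v0 - v1 - v2 - v3)
        + t ^ 2 * (c₁ * v1 + c₂ * v2 + c₃ * v3) + d * t ^ 3) := by
    intro v0 v1 v2 v3 t
    have h := congrArg (eval ![v0,v1,v2,v3,t]) hsub
    simpa using h
  have hlam1 : lam = 1 := by linear_combination -(key 0 1 1 1 0)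
  subst hlam1
  have hD : α 3 = 0 := by
    linear_combination (key 0 1 1 0 1) - (1/3 : k) * (key 0 1 1 0 (-1)) - (1/6 : k) * (key 0 1 1 0 2)
  have hC : α 2 = 0 := by
    linear_combination (key 0 1 0 1 1) - (1/3 : k) * (key 0 1 0 1 (-1)) - (1/6 : k) * (key 0 1 0 1 2)
  have hB : α 1 = 0 := by
    linear_combination (key 0 0 1 1 1) - (1/3 : k) * (key 0 0 1 1 (-1)) - (1/6 : k) * (key 0 0 1 1 2)
  have hA : α 0 = 0 := by
    have e1 := key 0 1 1 0 1
    have e2 := key 0 1 1 0 (-1)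
    rw [hB, hC, hD] at e1 e2
    linear_combination (-1/4 : k) * e1 + (-1/4 : k) * e2
  refine ⟨fun i => ?_, rfl⟩
  fin_cases i <;> assumption
end

section
/- Let σ, σ′ ∈ GL₅(k) be the linear maps σ(x₀,...,x₄) = (x₁+x₂+x₃−x₀, x₁, x₂, x₃, x₄) and σ′(x₀,...,x₄) = (x₁+x₄−x₀, x₁, x₄−x₂, x₄−x₃, x₄), and let τ ∈ GL₅(k) be any permutation of the coordinates x₁, x₂, x₃ (fixing x₀ and x₄). Then σ, σ′ and all such τ preserve the 3-dimensional linear subspace W = {v ∈ k⁵ : v₄ = 0 and 2v₀ = v₁+v₂+v₃}; hence the subgroup of GL₅(k) they generate leaves the corresponding plane {x₄ = 0, 2x₀ = x₁+x₂+x₃} ⊂ ℙ⁴ invariant. -/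
/-- The linear maps `σ(x) = (x₁+x₂+x₃−x₀, x₁, x₂, x₃, x₄)`,
`σ′(x) = (x₁+x₄−x₀, x₁, x₄−x₂, x₄−x₃, x₄)` and every coordinate permutation `τ`
of `x₁, x₂, x₃` (fixing `x₀, x₄`) preserve the 3-dimensional subspace
`W = {v : v₄ = 0, 2v₀ = v₁+v₂+v₃}` of `k⁵`, hence the corresponding plane in ℙ⁴. -/
theorem stmt_10 {k : Type} [Field k] [IsAlgClosed k] [CharZero k]
    (W : Set (Fin 5 → k))
    (hW : W = {v | v 4 = 0 ∧ 2 * v 0 = v 1 + v 2 + v 3})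
    (σ σ' : (Fin 5 → k) → (Fin 5 → k))
    (hσ : σ = fun v => ![v 1 + v 2 + v 3 - v 0, v 1, v 2, v 3, v 4])
    (hσ' : σ' = fun v => ![v 1 + v 4 - v 0, v 1, v 4 - v 2, v 4 - v 3, v 4]) :
    (∀ v ∈ W, σ v ∈ W) ∧ (∀ v ∈ W, σ' v ∈ W) ∧
    ∀ τ : Equiv.Perm (Fin 5), τ 0 = 0 → τ 4 = 4 → ∀ v ∈ W, (v ∘ τ) ∈ W := by
  subst hW hσ hσ'
  refine ⟨?_, ?_, ?_⟩
  · rintro v ⟨h4, h0⟩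
    refine ⟨h4, ?_⟩
    show 2 * (v 1 + v 2 + v 3 - v 0) = v 1 + v 2 + v 3
    linear_combination -h0
  · rintro v ⟨h4, h0⟩
    refine ⟨h4, ?_⟩
    show 2 * (v 1 + v 4 - v 0) = v 1 + (v 4 - v 2) + (v 4 - v 3)
    linear_combination -h0
  · intro τ h0 h4 v hv
    obtain ⟨hv4, hv0⟩ := hv
    have inj := τ.injective
    have all5 : ∀ j : Fin 5, j = 0 ∨ j = 1 ∨ j = 2 ∨ j = 3 ∨ j = 4 := by decide
    have mid : ∀ i : Fin 5, i ≠ 0 → i ≠ 4 → τ i = 1 ∨ τ i = 2 ∨ τ i = 3 := by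
      intro i hi0 hi4
      rcases all5 (τ i) with h | h | h | h | h
      · exact absurd (inj (h.trans h0.symm)) hi0
      · exact Or.inl h
      · exact Or.inr (Or.inl h)
      · exact Or.inr (Or.inr h)
      · exact absurd (inj (h.trans h4.symm)) hi4
    have h1 := mid 1 (by decide) (by decide)
    have h2 := mid 2 (by decide) (by decide)
    have h3 := mid 3 (by decide) (by decide)
    refine ⟨by simp [Function.comp, h4, hv4], ?_⟩
    show 2 * v (τ 0) = v (τ 1) + v (τ 2) + v (τ 3)
    rw [h0]
    rcases h1 with e1 | e1 | e1 <;> rcases h2 with e2 | e2 | e2 <;>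
      rcases h3 with e3 | e3 | e3 <;>
      first
        | (exact absurd (inj (e1.trans e2.symm)) (by decide))
        | (exact absurd (inj (e1.trans e3.symm)) (by decide))
        | (exact absurd (inj (e2.trans e3.symm)) (by decide))
        | (rw [e1, e2, e3]; linear_combination hv0)
end

section
/- Let F = ∑_{0≤i<j<k≤4} a_{ijk}·x_i·x_j·x_k with a₀₂₄ ≠ 0, and assume that for every t ∈ {0,...,4} the sum of all coefficients a_{ijk} with t ∈ {i,j,k} equals zero (so that the six points p₁,...,p₆ are singular points of {F = 0}). Let g be the linear map g(x₀,...,x₄) = (x₄−x₃, −x₃, x₀−x₃, x₁−x₃, x₂−x₃). Then F∘g = λ·F for some λ ∈ k* if and only if there exist A, B, C, D ∈ k with A + B + C + D = 0 such that a₀₂₄ = A; a₀₁₂ = a₂₃₄ = B and a₁₂₃ = −B; a₀₁₄ = a₀₂₃ = C and a₀₁₃ = −C; a₀₃₄ = a₁₂₄ = D and a₁₃₄ = −D. -/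
open MvPolynomial

set_option maxHeartbeats 2000000 in
/-- Let `F = ∑_{0≤i<j<k≤4} a_{ijk} x_i x_j x_k` with `a₀₂₄ ≠ 0` and
with all six points `e₀, e₂, e₄, e₁, e₃, (1,1,1,1,1)` singular (every coefficient
sum over triples containing a given index vanishes). Let `g` be the linear
substitution `x₀ ↦ x₄−x₃, x₁ ↦ −x₃, x₂ ↦ x₀−x₃, x₃ ↦ x₁−x₃, x₄ ↦ x₂−x₃`.
Then `F∘g = λ·F` for some `λ ≠ 0` iff the coefficients satisfy the pattern
`a₀₂₄ = A`, `a₀₁₂ = −a₁₂₃ = a₂₃₄ = B`, `a₀₁₄ = −a₀₁₃ = a₀₂₃ = C`,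
`a₀₃₄ = a₁₂₄ = −a₁₃₄ = D` with `A + B + C + D = 0`. -/
theorem stmt_13 {k : Type} [Field k] [IsAlgClosed k] [CharZero k]
    (a : Fin 5 → Fin 5 → Fin 5 → k) (F : MvPolynomial (Fin 5) k)
    (hF : F = ∑ t ∈ Finset.univ.filter
        (fun t : Fin 5 × Fin 5 × Fin 5 => t.1 < t.2.1 ∧ t.2.1 < t.2.2),
      C (a t.1 t.2.1 t.2.2) * (X t.1 * X t.2.1 * X t.2.2))
    (ha : a 0 2 4 ≠ 0)
    (hsum : ∀ t : Fin 5, ∑ s ∈ Finset.univ.filter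
        (fun s : Fin 5 × Fin 5 × Fin 5 =>
          s.1 < s.2.1 ∧ s.2.1 < s.2.2 ∧ (s.1 = t ∨ s.2.1 = t ∨ s.2.2 = t)),
      a s.1 s.2.1 s.2.2 = 0) :
    (∃ lam : k, lam ≠ 0 ∧
      (MvPolynomial.bind₁ ![X 4 - X 3, -X 3, X 0 - X 3, X 1 - X 3, X 2 - X 3]) F
        = C lam * F) ↔
    ∃ A B Cc D : k, A + B + Cc + D = 0 ∧
      a 0 2 4 = A ∧
      a 0 1 2 = B ∧ a 2 3 4 = B ∧ a 1 2 3 = -B ∧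
      a 0 1 4 = Cc ∧ a 0 2 3 = Cc ∧ a 0 1 3 = -Cc ∧
      a 0 3 4 = D ∧ a 1 2 4 = D ∧ a 1 3 4 = -D := by
  have hF10 : F = C (a 0 1 2) * (X 0 * X 1 * X 2) + C (a 0 1 3) * (X 0 * X 1 * X 3)
      + C (a 0 1 4) * (X 0 * X 1 * X 4) + C (a 0 2 3) * (X 0 * X 2 * X 3)
      + C (a 0 2 4) * (X 0 * X 2 * X 4) + C (a 0 3 4) * (X 0 * X 3 * X 4)
      + C (a 1 2 3) * (X 1 * X 2 * X 3) + C (a 1 2 4) * (X 1 * X 2 * X 4)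
      + C (a 1 3 4) * (X 1 * X 3 * X 4) + C (a 2 3 4) * (X 2 * X 3 * X 4) := by
    rw [hF, show (Finset.univ.filter
        (fun t : Fin 5 × Fin 5 × Fin 5 => t.1 < t.2.1 ∧ t.2.1 < t.2.2)) =
      ({(0,1,2),(0,1,3),(0,1,4),(0,2,3),(0,2,4),(0,3,4),(1,2,3),(1,2,4),(1,3,4),(2,3,4)} :
        Finset (Fin 5 × Fin 5 × Fin 5)) from by decide]
    simp [Finset.sum_insert, Finset.mem_insert]
    ring
  have hs0 : a 0 1 2 + a 0 1 3 + a 0 1 4 + a 0 2 3 + a 0 2 4 + a 0 3 4 = 0 := by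
    have h := hsum 0
    rw [show (Finset.univ.filter (fun s : Fin 5 × Fin 5 × Fin 5 =>
        s.1 < s.2.1 ∧ s.2.1 < s.2.2 ∧ (s.1 = 0 ∨ s.2.1 = 0 ∨ s.2.2 = 0))) =
      ({(0,1,2),(0,1,3),(0,1,4),(0,2,3),(0,2,4),(0,3,4)} :
        Finset (Fin 5 × Fin 5 × Fin 5)) from by decide] at h
    simp [Finset.sum_insert, Finset.mem_insert] at h
    linear_combination h
  have hs1 : a 0 1 2 + a 0 1 3 + a 0 1 4 + a 1 2 3 + a 1 2 4 + a 1 3 4 = 0 := by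
    have h := hsum 1
    rw [show (Finset.univ.filter (fun s : Fin 5 × Fin 5 × Fin 5 =>
        s.1 < s.2.1 ∧ s.2.1 < s.2.2 ∧ (s.1 = 1 ∨ s.2.1 = 1 ∨ s.2.2 = 1))) =
      ({(0,1,2),(0,1,3),(0,1,4),(1,2,3),(1,2,4),(1,3,4)} :
        Finset (Fin 5 × Fin 5 × Fin 5)) from by decide] at h
    simp [Finset.sum_insert, Finset.mem_insert] at h
    linear_combination h
  have hs2 : a 0 1 2 + a 0 2 3 + a 0 2 4 + a 1 2 3 + a 1 2 4 + a 2 3 4 = 0 := by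
    have h := hsum 2
    rw [show (Finset.univ.filter (fun s : Fin 5 × Fin 5 × Fin 5 =>
        s.1 < s.2.1 ∧ s.2.1 < s.2.2 ∧ (s.1 = 2 ∨ s.2.1 = 2 ∨ s.2.2 = 2))) =
      ({(0,1,2),(0,2,3),(0,2,4),(1,2,3),(1,2,4),(2,3,4)} :
        Finset (Fin 5 × Fin 5 × Fin 5)) from by decide] at h
    simp [Finset.sum_insert, Finset.mem_insert] at h
    linear_combination h
  have hs3 : a 0 1 3 + a 0 2 3 + a 0 3 4 + a 1 2 3 + a 1 3 4 + a 2 3 4 = 0 := by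
    have h := hsum 3
    rw [show (Finset.univ.filter (fun s : Fin 5 × Fin 5 × Fin 5 =>
        s.1 < s.2.1 ∧ s.2.1 < s.2.2 ∧ (s.1 = 3 ∨ s.2.1 = 3 ∨ s.2.2 = 3))) =
      ({(0,1,3),(0,2,3),(0,3,4),(1,2,3),(1,3,4),(2,3,4)} :
        Finset (Fin 5 × Fin 5 × Fin 5)) from by decide] at h
    simp [Finset.sum_insert, Finset.mem_insert] at h
    linear_combination h
  have hs4 : a 0 1 4 + a 0 2 4 + a 0 3 4 + a 1 2 4 + a 1 3 4 + a 2 3 4 = 0 := by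
    have h := hsum 4
    rw [show (Finset.univ.filter (fun s : Fin 5 × Fin 5 × Fin 5 =>
        s.1 < s.2.1 ∧ s.2.1 < s.2.2 ∧ (s.1 = 4 ∨ s.2.1 = 4 ∨ s.2.2 = 4))) =
      ({(0,1,4),(0,2,4),(0,3,4),(1,2,4),(1,3,4),(2,3,4)} :
        Finset (Fin 5 × Fin 5 × Fin 5)) from by decide] at h
    simp [Finset.sum_insert, Finset.mem_insert] at h
    linear_combination h
  constructor
  · rintro ⟨lam, hlam, h⟩
    rw [hF10] at h
    have ev : ∀ v : Fin 5 → k,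
        eval v ((MvPolynomial.bind₁ ![X 4 - X 3, -X 3, X 0 - X 3, X 1 - X 3, X 2 - X 3])
          (C (a 0 1 2) * (X 0 * X 1 * X 2) + C (a 0 1 3) * (X 0 * X 1 * X 3)
      + C (a 0 1 4) * (X 0 * X 1 * X 4) + C (a 0 2 3) * (X 0 * X 2 * X 3)
      + C (a 0 2 4) * (X 0 * X 2 * X 4) + C (a 0 3 4) * (X 0 * X 3 * X 4)
      + C (a 1 2 3) * (X 1 * X 2 * X 3) + C (a 1 2 4) * (X 1 * X 2 * X 4)
      + C (a 1 3 4) * (X 1 * X 3 * X 4) + C (a 2 3 4) * (X 2 * X 3 * X 4)))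
        = eval v (C lam * (C (a 0 1 2) * (X 0 * X 1 * X 2) + C (a 0 1 3) * (X 0 * X 1 * X 3)
      + C (a 0 1 4) * (X 0 * X 1 * X 4) + C (a 0 2 3) * (X 0 * X 2 * X 3)
      + C (a 0 2 4) * (X 0 * X 2 * X 4) + C (a 0 3 4) * (X 0 * X 3 * X 4)
      + C (a 1 2 3) * (X 1 * X 2 * X 3) + C (a 1 2 4) * (X 1 * X 2 * X 4)
      + C (a 1 3 4) * (X 1 * X 3 * X 4) + C (a 2 3 4) * (X 2 * X 3 * X 4))) := by
      intro v; rw [h]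
    have e024 := ev ![1,0,1,0,1]
    have e012 := ev ![1,1,1,0,0]
    have e014 := ev ![1,1,0,0,1]
    have e124 := ev ![0,1,1,0,1]
    have e034 := ev ![1,0,0,1,1]
    have e123 := ev ![0,1,1,1,0]
    have e013 := ev ![1,1,0,1,0]
    simp only [map_add, map_mul, map_sub, map_neg, bind₁_X_right, bind₁_C_right, eval_X, eval_C,
      Matrix.cons_val_zero, Matrix.cons_val_one, Matrix.head_cons,
      Matrix.cons_val_two, Matrix.tail_cons, Matrix.cons_val_three,
      Matrix.cons_val_four] at e024 e012 e014 e124 e034 e123 e013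
    have hl : lam = 1 := by
      have h' : (lam - 1) * a 0 2 4 = 0 := by linear_combination -e024
      rcases mul_eq_zero.mp h' with h'' | h''
      · exact sub_eq_zero.mp h''
      · exact absurd h'' ha
    subst hl
    refine ⟨a 0 2 4, a 0 1 2, a 0 1 4, a 0 3 4, ?_, rfl, rfl, ?_, ?_, rfl, ?_, ?_, rfl, ?_, ?_⟩
    · linear_combination -e014 + e013 + hs0
    · linear_combination e012
    · linear_combination -e123
    · linear_combination e014
    · linear_combination -e013
    · linear_combination -e124
    · linear_combination -e034
  · rintro ⟨A, B, Cc, D, hABCD, h1, h2, h3, h4, h5, h6, h7, h8, h9, h10⟩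
    refine ⟨1, one_ne_zero, ?_⟩
    rw [hF10, h1, h2, h3, h4, h5, h6, h7, h8, h9, h10]
    have hD : (C D : MvPolynomial (Fin 5) k) = -(C A + C B + C Cc) := by
      rw [show D = -(A + B + Cc) by linear_combination hABCD]
      simp
    simp only [map_add, map_mul, map_sub, map_neg, bind₁_X_right, bind₁_C_right,
      Matrix.cons_val_zero, Matrix.cons_val_one, Matrix.head_cons,
      Matrix.cons_val_two, Matrix.tail_cons, Matrix.cons_val_three,
      Matrix.cons_val_four, map_one, hD]
    ring
end

section
/- Let F = ∑_{0≤i<j<k≤4} a_{ijk}·x_i·x_j·x_k whose coefficients satisfy the pattern: a₀₂₄ = A; a₀₁₂ = a₂₃₄ = B, a₁₂₃ = −B; a₀₁₄ = a₀₂₃ = C, a₀₁₃ = −C; a₀₃₄ = a₁₂₄ = D, a₁₃₄ = −D, where A + B + C + D = 0 and A ≠ 0. Let ρ be the coordinate permutation x₀ ↦ x₂, x₂ ↦ x₄, x₄ ↦ x₀, x₁ ↦ x₁, x₃ ↦ x₃. Then F∘ρ = λ·F for some λ ∈ k* if and only if B = C = D (and in that case λ = 1). -/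
open MvPolynomial

/-- Let `F` be the cubic with coefficient pattern `a₀₂₄ = A`,
`a₀₁₂ = a₂₃₄ = B, a₁₂₃ = −B`, `a₀₁₄ = a₀₂₃ = C, a₀₁₃ = −C`,
`a₀₃₄ = a₁₂₄ = D, a₁₃₄ = −D`, where `A + B + C + D = 0`, `A ≠ 0`.
Let `ρ` be the coordinate permutation `x₀ ↦ x₂, x₂ ↦ x₄, x₄ ↦ x₀` (fixing
`x₁, x₃`). Then `F∘ρ = λ·F` for some `λ ≠ 0` iff `B = C = D`, and in that case
`F∘ρ = F` (i.e. `λ = 1`). -/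
theorem stmt_14 {k : Type} [Field k] [IsAlgClosed k] [CharZero k]
    (A B Cc D : k) (hsum : A + B + Cc + D = 0) (hA : A ≠ 0)
    (F : MvPolynomial (Fin 5) k)
    (hF : F = C A * (X 0 * X 2 * X 4)
      + C B * (X 0 * X 1 * X 2) + C B * (X 2 * X 3 * X 4) - C B * (X 1 * X 2 * X 3)
      + C Cc * (X 0 * X 1 * X 4) + C Cc * (X 0 * X 2 * X 3) - C Cc * (X 0 * X 1 * X 3)
      + C D * (X 0 * X 3 * X 4) + C D * (X 1 * X 2 * X 4) - C D * (X 1 * X 3 * X 4))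
    (π : Fin 5 → Fin 5) (hπ : π = ![2, 1, 4, 3, 0]) :
    ((∃ lam : k, lam ≠ 0 ∧ MvPolynomial.rename π F = C lam * F) ↔
      (B = Cc ∧ Cc = D)) ∧
    ((B = Cc ∧ Cc = D) → MvPolynomial.rename π F = F) := by
  subst hF hπ
  have hren : (MvPolynomial.rename ![2, 1, 4, 3, 0] (C A * (X 0 * X 2 * X 4)
      + C B * (X 0 * X 1 * X 2) + C B * (X 2 * X 3 * X 4) - C B * (X 1 * X 2 * X 3)
      + C Cc * (X 0 * X 1 * X 4) + C Cc * (X 0 * X 2 * X 3) - C Cc * (X 0 * X 1 * X 3)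
      + C D * (X 0 * X 3 * X 4) + C D * (X 1 * X 2 * X 4) - C D * (X 1 * X 3 * X 4)) : MvPolynomial (Fin 5) k)
      = (C A * (X 0 * X 2 * X 4)
      + C Cc * (X 0 * X 1 * X 2) + C Cc * (X 2 * X 3 * X 4) - C Cc * (X 1 * X 2 * X 3)
      + C D * (X 0 * X 1 * X 4) + C D * (X 0 * X 2 * X 3) - C D * (X 0 * X 1 * X 3)
      + C B * (X 0 * X 3 * X 4) + C B * (X 1 * X 2 * X 4) - C B * (X 1 * X 3 * X 4)) := by
    simp only [map_add, map_sub, map_mul, rename_C, rename_X,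
      Matrix.cons_val_zero, Matrix.cons_val_one, Matrix.head_cons,
      Matrix.cons_val_two, Matrix.tail_cons, Matrix.cons_val_three,
      Matrix.cons_val_four]
    ring
  rw [hren]
  constructor
  · constructor
    · rintro ⟨lam, hlam, h⟩
      have e1 := congrArg (eval ![(1:k),0,1,0,1]) h
      have e2 := congrArg (eval ![(1:k),1,1,0,0]) h
      have e3 := congrArg (eval ![(1:k),0,1,1,0]) h
      simp [eval_C, eval_X] at e1 e2 e3
      have hlam1 : lam = 1 := by
        have h' : A * lam = A * 1 := by linear_combination -e1
        exact mul_left_cancel₀ hA h'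
      subst hlam1
      constructor
      · linear_combination -e2
      · linear_combination -e3
    · rintro ⟨rfl, rfl⟩
      exact ⟨1, one_ne_zero, by rw [map_one, one_mul]⟩
  · rintro ⟨rfl, rfl⟩
    ring
end

section
/- Let a ∈ k with a ≠ 0 and a ≠ −1. There exists a linear map g ∈ GL₅(k) such that g(e₀) ∈ k*·e₁, g(e₁) ∈ k*·e₂, g(e₂) ∈ k*·e₀, g(e₃) ∈ k*·e₃, g(e₄) ∈ k*·e₄ (i.e. g projectively realizes the 3-cycle on the singular points e₀, e₁, e₂ of {F_a = 0} and fixes e₃, e₄) and F_a∘g = λ·F_a for some λ ∈ k*, if and only if a³ = 1. -/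
open MvPolynomial

lemma evalF {k : Type} [Field k] (a : k) (w : Fin 5 → k) :
    MvPolynomial.eval w ((∑ i : Fin 5, X i * X (i + 1) * X (i + 2)) + C a * ∑ i : Fin 5, X i * X (i + 1) * X (i + 3) : MvPolynomial (Fin 5) k)
    = w 0 * w 1 * w 2 + w 1 * w 2 * w 3 + w 2 * w 3 * w 4 + w 3 * w 4 * w 0 + w 4 * w 0 * w 1
      + a * (w 0 * w 1 * w 3 + w 1 * w 2 * w 4 + w 2 * w 3 * w 0 + w 3 * w 4 * w 1 + w 4 * w 0 * w 2) := by
  simp [Fin.sum_univ_five]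

def gfun {k : Type} [Field k] (a : k) : (Fin 5 → k) →ₗ[k] (Fin 5 → k) where
  toFun v := ![v 2, a^2 * v 0, a * v 1, a * v 3, a^2 * v 4]
  map_add' u v := by funext i; fin_cases i <;> simp <;> ring
  map_smul' c v := by funext i; fin_cases i <;> simp <;> ring

def gfuninv {k : Type} [Field k] (a : k) : (Fin 5 → k) →ₗ[k] (Fin 5 → k) where
  toFun w := ![a * w 1, a^2 * w 2, w 0, a^2 * w 3, a * w 4]
  map_add' u v := by funext i; fin_cases i <;> simp <;> ring
  map_smul' c v := by funext i; fin_cases i <;> simp <;> ring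

def gequiv {k : Type} [Field k] (a : k) (h3 : a ^ 3 = 1) : (Fin 5 → k) ≃ₗ[k] (Fin 5 → k) :=
  LinearEquiv.ofLinear (gfun a) (gfuninv a)
    (by
      apply LinearMap.ext; intro w; funext i
      fin_cases i <;> simp [gfun, gfuninv] <;>
        first
          | linear_combination (w 0) * h3
          | linear_combination (w 1) * h3
          | linear_combination (w 2) * h3
          | linear_combination (w 3) * h3
          | linear_combination (w 4) * h3)
    (by
      apply LinearMap.ext; intro w; funext i
      fin_cases i <;> simp [gfun, gfuninv] <;>
        first
          | linear_combination (w 0) * h3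
          | linear_combination (w 1) * h3
          | linear_combination (w 2) * h3
          | linear_combination (w 3) * h3
          | linear_combination (w 4) * h3)

/-- For `a ≠ 0, −1`, there exists a linear automorphism `g` of `k⁵`
realizing projectively the 3-cycle `(e₀ e₁ e₂)` on the coordinate points (and
fixing `e₃, e₄` projectively) with `F_a∘g = λ·F_a` for some `λ ≠ 0`, iff `a³ = 1`. -/
theorem stmt_17 {k : Type} [Field k] [IsAlgClosed k] [CharZero k]
    (a : k) (ha0 : a ≠ 0) (ha1 : a ≠ -1)
    (S₁ S₂ F : MvPolynomial (Fin 5) k)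
    (hS₁ : S₁ = ∑ i : Fin 5, X i * X (i + 1) * X (i + 2))
    (hS₂ : S₂ = ∑ i : Fin 5, X i * X (i + 1) * X (i + 3))
    (hFa : F = S₁ + C a * S₂) :
    (∃ g : (Fin 5 → k) ≃ₗ[k] (Fin 5 → k),
      (∃ c : k, c ≠ 0 ∧ g (Pi.single 0 1) = c • (Pi.single 1 1 : Fin 5 → k)) ∧
      (∃ c : k, c ≠ 0 ∧ g (Pi.single 1 1) = c • (Pi.single 2 1 : Fin 5 → k)) ∧
      (∃ c : k, c ≠ 0 ∧ g (Pi.single 2 1) = c • (Pi.single 0 1 : Fin 5 → k)) ∧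
      (∃ c : k, c ≠ 0 ∧ g (Pi.single 3 1) = c • (Pi.single 3 1 : Fin 5 → k)) ∧
      (∃ c : k, c ≠ 0 ∧ g (Pi.single 4 1) = c • (Pi.single 4 1 : Fin 5 → k)) ∧
      (∃ lam : k, lam ≠ 0 ∧
        ∀ v : Fin 5 → k,
          MvPolynomial.eval (g v) F = lam * MvPolynomial.eval v F)) ↔
    a ^ 3 = 1 := by
  subst hS₁ hS₂ hFa
  constructor
  · rintro ⟨g, ⟨c₀, hc₀, h0⟩, ⟨c₁, hc₁, h1⟩, ⟨c₂, hc₂, h2⟩, ⟨c₃, hc₃, hg3⟩,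
      ⟨c₄, hc₄, h4⟩, ⟨lam, hlam, heval⟩⟩
    -- equation from subset {0,1,3}
    have E1 : c₀ * c₁ * c₃ = lam * a := by
      have hv := heval (Pi.single 0 1 + Pi.single 1 1 + Pi.single 3 1)
      have hgv : g (Pi.single 0 1 + Pi.single 1 1 + Pi.single 3 1)
          = c₀ • (Pi.single 1 1 : Fin 5 → k) + c₁ • (Pi.single 2 1 : Fin 5 → k) + c₃ • (Pi.single 3 1 : Fin 5 → k) := by
        rw [map_add, map_add, h0, h1, hg3]
      rw [hgv, evalF, evalF] at hv
      simp [Pi.single_apply] at hv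
      linear_combination hv
    -- {0,2,3}
    have E2 : a * (c₀ * c₂ * c₃) = lam * a := by
      have hv := heval (Pi.single 0 1 + Pi.single 2 1 + Pi.single 3 1)
      have hgv : g (Pi.single 0 1 + Pi.single 2 1 + Pi.single 3 1)
          = c₀ • (Pi.single 1 1 : Fin 5 → k) + c₂ • (Pi.single 0 1 : Fin 5 → k) + c₃ • (Pi.single 3 1 : Fin 5 → k) := by
        rw [map_add, map_add, h0, h2, hg3]
      rw [hgv, evalF, evalF] at hv
      simp [Pi.single_apply] at hv
      linear_combination hv
    -- {0,2,4}
    have E3 : c₀ * c₂ * c₄ = lam * a := by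
      have hv := heval (Pi.single 0 1 + Pi.single 2 1 + Pi.single 4 1)
      have hgv : g (Pi.single 0 1 + Pi.single 2 1 + Pi.single 4 1)
          = c₀ • (Pi.single 1 1 : Fin 5 → k) + c₂ • (Pi.single 0 1 : Fin 5 → k) + c₄ • (Pi.single 4 1 : Fin 5 → k) := by
        rw [map_add, map_add, h0, h2, h4]
      rw [hgv, evalF, evalF] at hv
      simp [Pi.single_apply] at hv
      linear_combination hv
    -- {1,2,4}
    have E4 : a * (c₁ * c₂ * c₄) = lam * a := by
      have hv := heval (Pi.single 1 1 + Pi.single 2 1 + Pi.single 4 1)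
      have hgv : g (Pi.single 1 1 + Pi.single 2 1 + Pi.single 4 1)
          = c₁ • (Pi.single 2 1 : Fin 5 → k) + c₂ • (Pi.single 0 1 : Fin 5 → k) + c₄ • (Pi.single 4 1 : Fin 5 → k) := by
        rw [map_add, map_add, h1, h2, h4]
      rw [hgv, evalF, evalF] at hv
      simp [Pi.single_apply] at hv
      linear_combination hv
    -- {0,1,4}
    have E5 : a * (c₀ * c₁ * c₄) = lam := by
      have hv := heval (Pi.single 0 1 + Pi.single 1 1 + Pi.single 4 1)
      have hgv : g (Pi.single 0 1 + Pi.single 1 1 + Pi.single 4 1)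
          = c₀ • (Pi.single 1 1 : Fin 5 → k) + c₁ • (Pi.single 2 1 : Fin 5 → k) + c₄ • (Pi.single 4 1 : Fin 5 → k) := by
        rw [map_add, map_add, h0, h1, h4]
      rw [hgv, evalF, evalF] at hv
      simp [Pi.single_apply] at hv
      linear_combination hv
    have E2' : c₀ * c₂ * c₃ = lam := mul_left_cancel₀ ha0 (E2.trans (mul_comm lam a))
    have E4' : c₁ * c₂ * c₄ = lam := mul_left_cancel₀ ha0 (E4.trans (mul_comm lam a))
    have p1 : c₀^2 * c₁^2 * c₂^2 * c₃ * c₄^2 = lam^3 * a^2 := by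
      linear_combination (c₀*c₂*c₄) * (c₁*c₂*c₄) * E1 + (lam*a) * (c₁*c₂*c₄) * E3 +
        (lam*a) * (lam*a) * E4'
    have p2 : a * (c₀^2 * c₁^2 * c₂^2 * c₃ * c₄^2) = lam^3 := by
      linear_combination (c₁*c₂*c₄) * (a*(c₀*c₁*c₄)) * E2' + lam * (a*(c₀*c₁*c₄)) * E4' +
        lam * lam * E5
    have key : a ^ 3 * lam ^ 3 = 1 * lam ^ 3 := by linear_combination p2 - a * p1
    exact mul_right_cancel₀ (pow_ne_zero 3 hlam) key
  · intro h3
    refine ⟨gequiv a h3, ⟨a^2, pow_ne_zero 2 ha0, ?_⟩, ⟨a, ha0, ?_⟩, ⟨1, one_ne_zero, ?_⟩,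
      ⟨a, ha0, ?_⟩, ⟨a^2, pow_ne_zero 2 ha0, ?_⟩, ⟨1, one_ne_zero, ?_⟩⟩ <;>
      try (funext i; fin_cases i <;> simp [gequiv, gfun, Pi.single_apply])
    intro v
    have e0 : (gequiv a h3) v 0 = v 2 := by simp [gequiv, gfun]
    have e1 : (gequiv a h3) v 1 = a^2 * v 0 := by simp [gequiv, gfun]
    have e2 : (gequiv a h3) v 2 = a * v 1 := by simp [gequiv, gfun]
    have e3 : (gequiv a h3) v 3 = a * v 3 := by simp [gequiv, gfun]
    have e4 : (gequiv a h3) v 4 = a^2 * v 4 := by simp [gequiv, gfun]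
    rw [evalF, evalF, e0, e1, e2, e3, e4]
    linear_combination (v 0 * v 1 * v 2 + a * (v 0 * v 1 * v 3) + a * (v 1 * v 3 * v 4) +
      v 2 * v 3 * v 4 + a * (v 0 * v 2 * v 4) + a * (v 0 * v 2 * v 3) +
      (a^3 + 1) * (v 0 * v 1 * v 4) + v 1 * v 2 * v 3 + (a^3 + 1) * (v 0 * v 3 * v 4) +
      a * (v 1 * v 2 * v 4)) * h3
end

section
/- Let ζ ∈ k be a primitive 5th root of unity and let p = (1, ζ, ζ², ζ³, ζ⁴), q = (1, ζ⁴, ζ³, ζ², ζ) ∈ k⁵. Then for every a ∈ k, the projective line in ℙ⁴ through the points represented by p and q is contained in the hypersurface {F_a = 0}: for all s, t ∈ k one has F_a(s·p + t·q) = 0 (indeed S₁(s·p + t·q) = 0 and S₂(s·p + t·q) = 0 identically). -/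
open MvPolynomial

/-- For `ζ` a primitive 5th root of unity,
`p = (1, ζ, ζ², ζ³, ζ⁴)` and `q = (1, ζ⁴, ζ³, ζ², ζ)`, the projective line
through `p` and `q` lies on the hypersurface `{F_a = 0}` for every `a`: indeed
`S₁` and `S₂` both vanish identically on `s·p + t·q`. -/
theorem stmt_18 {k : Type} [Field k] [IsAlgClosed k] [CharZero k]
    (ζ : k) (hζ5 : ζ ^ 5 = 1) (hζ1 : ζ ≠ 1)
    (S₁ S₂ : MvPolynomial (Fin 5) k)
    (hS₁ : S₁ = ∑ i : Fin 5, X i * X (i + 1) * X (i + 2))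
    (hS₂ : S₂ = ∑ i : Fin 5, X i * X (i + 1) * X (i + 3))
    (p q : Fin 5 → k)
    (hp : p = ![1, ζ, ζ ^ 2, ζ ^ 3, ζ ^ 4])
    (hq : q = ![1, ζ ^ 4, ζ ^ 3, ζ ^ 2, ζ]) :
    ∀ s t : k,
      MvPolynomial.eval (s • p + t • q) S₁ = 0 ∧
      MvPolynomial.eval (s • p + t • q) S₂ = 0 ∧
      ∀ a : k, MvPolynomial.eval (s • p + t • q) (S₁ + C a * S₂) = 0 := by
  intro s t
  have h1 : 1 + ζ + ζ ^ 2 + ζ ^ 3 + ζ ^ 4 = 0 := by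
    apply mul_left_cancel₀ (sub_ne_zero.mpr hζ1)
    rw [mul_zero]
    linear_combination hζ5
  have e1 : MvPolynomial.eval (s • p + t • q) S₁ = 0 := by
    subst hS₁ hp hq
    simp only [Fin.sum_univ_five]
    simp only [map_add, map_mul, eval_X, Pi.add_apply, Pi.smul_apply, smul_eq_mul]
    simp only [show ((0:Fin 5)+1) = 1 from rfl, show ((1:Fin 5)+1) = 2 from rfl,
      show ((2:Fin 5)+1) = 3 from rfl, show ((3:Fin 5)+1) = 4 from rfl,
      show ((4:Fin 5)+1) = 0 from rfl, show ((0:Fin 5)+2) = 2 from rfl,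
      show ((1:Fin 5)+2) = 3 from rfl, show ((2:Fin 5)+2) = 4 from rfl,
      show ((3:Fin 5)+2) = 0 from rfl, show ((4:Fin 5)+2) = 1 from rfl,
      show ((0:Fin 5)+3) = 3 from rfl, show ((1:Fin 5)+3) = 4 from rfl,
      show ((2:Fin 5)+3) = 0 from rfl, show ((3:Fin 5)+3) = 1 from rfl,
      show ((4:Fin 5)+3) = 2 from rfl,
      Matrix.cons_val_zero, Matrix.cons_val_one, Matrix.head_cons,
      Matrix.cons_val_two, Matrix.cons_val_three, Matrix.cons_val_four, Matrix.tail_cons]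
    linear_combination ((1 : k) * t^3 + (3 : k) * s * t^2 + (3 : k) * s^2 * t + (1 : k) * s^3 + (1 : k) * t^3 * ζ + (3 : k) * s * t^2 * ζ + (3 : k) * s^2 * t * ζ + (1 : k) * s^3 * ζ + (1 : k) * t^3 * ζ^2 + (2 : k) * s * t^2 * ζ^2 + (2 : k) * s^2 * t * ζ^2 + (1 : k) * s^3 * ζ^2 + (2 : k) * s * t^2 * ζ^3 + (2 : k) * s^2 * t * ζ^3 + (1 : k) * t^3 * ζ^4 + (1 : k) * s * t^2 * ζ^4 + (1 : k) * s^2 * t * ζ^4 + (1 : k) * s^3 * ζ^4 + (1 : k) * s * t^2 * ζ^5 + (1 : k) * s^2 * t * ζ^5) * hζ5 + (s + t)^3 * h1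
  have e2 : MvPolynomial.eval (s • p + t • q) S₂ = 0 := by
    subst hS₂ hp hq
    simp only [Fin.sum_univ_five]
    simp only [map_add, map_mul, eval_X, Pi.add_apply, Pi.smul_apply, smul_eq_mul]
    simp only [show ((0:Fin 5)+1) = 1 from rfl, show ((1:Fin 5)+1) = 2 from rfl,
      show ((2:Fin 5)+1) = 3 from rfl, show ((3:Fin 5)+1) = 4 from rfl,
      show ((4:Fin 5)+1) = 0 from rfl, show ((0:Fin 5)+2) = 2 from rfl,
      show ((1:Fin 5)+2) = 3 from rfl, show ((2:Fin 5)+2) = 4 from rfl,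
      show ((3:Fin 5)+2) = 0 from rfl, show ((4:Fin 5)+2) = 1 from rfl,
      show ((0:Fin 5)+3) = 3 from rfl, show ((1:Fin 5)+3) = 4 from rfl,
      show ((2:Fin 5)+3) = 0 from rfl, show ((3:Fin 5)+3) = 1 from rfl,
      show ((4:Fin 5)+3) = 2 from rfl,
      Matrix.cons_val_zero, Matrix.cons_val_one, Matrix.head_cons,
      Matrix.cons_val_two, Matrix.cons_val_three, Matrix.cons_val_four, Matrix.tail_cons]
    linear_combination ((1 : k) * t^3 + (3 : k) * s * t^2 + (3 : k) * s^2 * t + (1 : k) * s^3 + (1 : k) * t^3 * ζ + (3 : k) * s * t^2 * ζ + (3 : k) * s^2 * t * ζ + (1 : k) * s^3 * ζ + (1 : k) * t^3 * ζ^2 + (3 : k) * s * t^2 * ζ^2 + (3 : k) * s^2 * t * ζ^2 + (1 : k) * s^3 * ζ^2 + (1 : k) * t^3 * ζ^3 + (1 : k) * s * t^2 * ζ^3 + (1 : k) * s^2 * t * ζ^3 + (1 : k) * s^3 * ζ^3 + (1 : k) * s * t^2 * ζ^5 + (1 : k) * s^2 * t * ζ^5 + (1 : k) * s * t^2 * ζ^6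 + (1 : k) * s^2 * t * ζ^6) * hζ5 + (s + t)^3 * h1
  refine ⟨e1, e2, fun a => ?_⟩
  simp [e1, e2]
end
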